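/- Let f₀ : ℝᴷ → ℝ be a concave non-decreasing utility function, ν > 0, Ψ, χ ≥ 0 constants. Suppose for all t the policy guarantees ΔL(t) - ν·f₀(φ(t)) ≤ Ψ + χ - ν·f₀*, where ΔL(t) = L(t+1) - L(t), L(0) = 0, L(t) ≥ 0, and f₀* is a constant. Then the time average (1/t)·Σ_{τ<t} f₀(φ(τ)) ≥ f₀* - (Ψ + χ)/ν for all t > 0, and by concavity (Jensen), f₀((1/t)·Σ_{τ<t} φ(τ)) ≥ f₀* - (Ψ + χ)/ν. -/
import Mathlib


theorem stmt_6 (K : ℕ) (f₀ : (Fin K → ℝ) → ℝ)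
    (hconc : ConcaveOn ℝ Set.univ f₀) (hmono : Monotone f₀)
    (ν Ψ χ fstar : ℝ) (hν : 0 < ν) (hΨ : 0 ≤ Ψ) (hχ : 0 ≤ χ)
    (L : ℕ → ℝ) (φ : ℕ → Fin K → ℝ)
    (hL0 : L 0 = 0) (hLnonneg : ∀ t, 0 ≤ L t)
    (hdrift : ∀ t, (L (t + 1) - L t) - ν * f₀ (φ t) ≤ Ψ + χ - ν * fstar) :
    ∀ t : ℕ, 0 < t →
      (1 / (t : ℝ)) * ∑ τ ∈ Finset.range t, f₀ (φ τ) ≥ fstar - (Ψ + χ) / ν ∧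
      f₀ ((1 / (t : ℝ)) • ∑ τ ∈ Finset.range t, φ τ) ≥ fstar - (Ψ + χ) / ν := by
  intro t ht
  have htpos : (0 : ℝ) < t := Nat.cast_pos.mpr ht
  have hsum : L t - ν * ∑ τ ∈ Finset.range t, f₀ (φ τ) ≤
      (t : ℝ) * (Ψ + χ - ν * fstar) := by
    have h := Finset.sum_le_sum (fun i _ => hdrift i) (s := Finset.range t)
    rw [Finset.sum_sub_distrib, Finset.sum_range_sub (f := L), hL0,
      ← Finset.mul_sum, Finset.sum_const, Finset.card_range, nsmul_eq_mul] at h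
    linarith
  have key : (fstar - (Ψ + χ) / ν) * t ≤ ∑ τ ∈ Finset.range t, f₀ (φ τ) := by
    have hL := hLnonneg t
    have hd : (Ψ + χ) / ν * ν = Ψ + χ := div_mul_cancel₀ _ hν.ne'
    nlinarith [hsum, hL]
  have h1 : (1 / (t : ℝ)) * ∑ τ ∈ Finset.range t, f₀ (φ τ) ≥ fstar - (Ψ + χ) / ν := by
    rw [ge_iff_le, one_div, ← div_eq_inv_mul, le_div_iff₀ htpos]
    exact key
  refine ⟨h1, ?_⟩
  have jensen : ∑ τ ∈ Finset.range t, (1 / (t : ℝ)) • f₀ (φ τ) ≤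
      f₀ (∑ τ ∈ Finset.range t, (1 / (t : ℝ)) • φ τ) :=
    hconc.le_map_sum (fun i _ => by positivity)
      (by simp [Finset.sum_const]; field_simp) (fun i _ => trivial)
  calc fstar - (Ψ + χ) / ν ≤ 1 / (t : ℝ) * ∑ τ ∈ Finset.range t, f₀ (φ τ) := h1
    _ = ∑ τ ∈ Finset.range t, (1 / (t : ℝ)) • f₀ (φ τ) := by
        rw [Finset.mul_sum]; simp [smul_eq_mul]
    _ ≤ f₀ (∑ τ ∈ Finset.range t, (1 / (t : ℝ)) • φ τ) := jensen
    _ = f₀ ((1 / (t : ℝ)) • ∑ τ ∈ Finset.range t, φ τ) := by rw [Finset.smul_sum]
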